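/- arXiv:1310.8119 — 9 statements merged into one kernel-verified Lean document; each statement's English description precedes it below -/
import Mathlib

section
/- For a unitary N×N matrix U, the weighted inner product ⟨F,G⟩_U := Σ_{i,j} |U_{ij}|² F_{ij} conj(G_{ij}) satisfies ⟨F,G⟩_U = ⟨C_U(F), C_U(G)⟩ and ⟨F,G⟩_U = ⟨D_U(F), D_U(G)⟩, where ⟨X,Y⟩ = tr(Y* X) is the standard inner product. -/
open Matrix

/-- `C_U(F) = (F ∘ U) U*` where `∘` is the Hadamard (entrywise) product. -/
noncomputable def Cmap {n : Type*} [Fintype n] (U F : Matrix n n ℂ) : Matrix n n ℂ :=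
  Matrix.hadamard F U * Uᴴ

/-- `D_U(F) = U (conj(F) ∘ U)*`. -/
noncomputable def Dmap {n : Type*} [Fintype n] (U F : Matrix n n ℂ) : Matrix n n ℂ :=
  U * (Matrix.hadamard (F.map (starRingEnd ℂ)) U)ᴴ

/-- Weighted inner product `⟨F,G⟩_U = Σ |U_{ij}|² F_{ij} conj(G_{ij})`. -/
noncomputable def wip {n : Type*} [Fintype n] (U F G : Matrix n n ℂ) : ℂ :=
  ∑ i, ∑ j, ((Complex.normSq (U i j) : ℝ) : ℂ) * F i j * (starRingEnd ℂ) (G i j)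

/-- Standard inner product `⟨F,G⟩ = tr(G* F)`. -/
noncomputable def sip {n : Type*} [Fintype n] (F G : Matrix n n ℂ) : ℂ :=
  (Gᴴ * F).trace

private lemma tr_entrywise {N : ℕ} (A B : Matrix (Fin N) (Fin N) ℂ) :
    (Bᴴ * A).trace = ∑ i, ∑ j, (starRingEnd ℂ) (B i j) * A i j := by
  rw [Matrix.trace]
  simp only [Matrix.diag_apply, Matrix.mul_apply, Matrix.conjTranspose_apply]
  rw [Finset.sum_comm]
  rfl

theorem stmt1 {N : ℕ} (U : Matrix (Fin N) (Fin N) ℂ)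
    (hU : Uᴴ * U = 1)
    (F G : Matrix (Fin N) (Fin N) ℂ) :
    wip U F G = sip (Cmap U F) (Cmap U G) ∧ wip U F G = sip (Dmap U F) (Dmap U G) := by
  constructor
  · rw [sip, Cmap, Cmap, Matrix.conjTranspose_mul, Matrix.conjTranspose_conjTranspose,
      Matrix.trace_mul_comm, Matrix.mul_assoc (Matrix.hadamard F U),
      ← Matrix.mul_assoc Uᴴ, hU, Matrix.one_mul, Matrix.trace_mul_comm, tr_entrywise]
    rw [wip]
    refine Finset.sum_congr rfl fun i _ => Finset.sum_congr rfl fun j _ => ?_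
    simp only [Matrix.hadamard_apply, _root_.map_mul]
    rw [← Complex.mul_conj]
    ring
  · rw [sip, Dmap, Dmap, Matrix.conjTranspose_mul, Matrix.conjTranspose_conjTranspose,
      Matrix.mul_assoc, ← Matrix.mul_assoc Uᴴ, hU, Matrix.one_mul,
      Matrix.trace_mul_comm, tr_entrywise]
    rw [wip]
    refine Finset.sum_congr rfl fun i _ => Finset.sum_congr rfl fun j _ => ?_
    simp only [Matrix.hadamard_apply, Matrix.map_apply, _root_.map_mul, RingHom.id_apply,
      Complex.conj_conj]
    rw [← Complex.mul_conj]
    ring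
end

section
/- If U is unitary with no zero entries, the Berezin transform I_U = C_U^{-1} ∘ D_U is unitary with respect to the weighted inner product ⟨·,·⟩_U, i.e. ⟨I_U(F), I_U(G)⟩_U = ⟨F,G⟩_U for all F, G ∈ M_N(ℂ). -/
open Matrix

lemma wip_eq_trace {n : Type*} [Fintype n] (U F G : Matrix n n ℂ) :
    wip U F G = ((Matrix.hadamard F U) * (Matrix.hadamard G U)ᴴ).trace := by
  unfold wip Matrix.trace
  refine Finset.sum_congr rfl fun j _ => ?_
  simp only [Matrix.diag_apply, Matrix.mul_apply, Matrix.conjTranspose_apply,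
    Matrix.hadamard_apply]
  refine Finset.sum_congr rfl fun i _ => ?_
  rw [← Complex.mul_conj]
  simp only [starRingEnd_apply, star_mul']
  ring

lemma wip_eq_trace' {n : Type*} [Fintype n] (U F G : Matrix n n ℂ) :
    wip U F G = ((Matrix.hadamard (F.map (starRingEnd ℂ)) U)ᴴ *
      (Matrix.hadamard (G.map (starRingEnd ℂ)) U)).trace := by
  unfold wip Matrix.trace
  rw [Finset.sum_comm]
  refine Finset.sum_congr rfl fun j _ => ?_
  simp only [Matrix.diag_apply, Matrix.mul_apply, Matrix.conjTranspose_apply,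
    Matrix.hadamard_apply, Matrix.map_apply]
  refine Finset.sum_congr rfl fun i _ => ?_
  rw [← Complex.mul_conj]
  simp only [starRingEnd_apply, star_mul', star_star]
  ring

/-- For a unitary `U` with no zero entries, the Berezin transform `I = C_U⁻¹ ∘ D_U`
(characterized by `C_U (I F) = D_U F`) is unitary with respect to `⟨·,·⟩_U`. -/
theorem stmt2 {N : ℕ} (U : Matrix (Fin N) (Fin N) ℂ)
    (hU : Uᴴ * U = 1) (hNZ : ∀ i j, U i j ≠ 0)
    (I : Matrix (Fin N) (Fin N) ℂ → Matrix (Fin N) (Fin N) ℂ)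
    (hI : ∀ F, Cmap U (I F) = Dmap U F) :
    ∀ F G : Matrix (Fin N) (Fin N) ℂ, wip U (I F) (I G) = wip U F G := by
  intro F G
  have hUU : U * Uᴴ = 1 := (mul_eq_one_comm).mp hU
  have key : ∀ H, Matrix.hadamard (I H) U =
      U * (Matrix.hadamard (H.map (starRingEnd ℂ)) U)ᴴ * U := by
    intro H
    have := congrArg (· * U) (hI H)
    simpa [Cmap, Dmap, Matrix.mul_assoc, hU] using this
  rw [wip_eq_trace, key F, key G, wip_eq_trace']
  set X := (Matrix.hadamard (F.map (starRingEnd ℂ)) U)ᴴ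
  set Y := (Matrix.hadamard (G.map (starRingEnd ℂ)) U)ᴴ
  have : U * X * U * (U * Y * U)ᴴ = U * (X * Yᴴ) * Uᴴ := by
    simp only [Matrix.conjTranspose_mul, ← Matrix.mul_assoc]
    rw [Matrix.mul_assoc (U * X) U Uᴴ, hUU, Matrix.mul_one]
  rw [this, Matrix.trace_mul_comm, ← Matrix.mul_assoc, hU, Matrix.one_mul]
  simp only [Y, Matrix.conjTranspose_conjTranspose]
end

section
/- For a unitary U with no zero entries, the Berezin transform is given entrywise by I_U(F)_{ij} = (1/U_{ij}) Σ_{k,l} U_{il} U_{kj} conj(U_{kl}) F_{kl}, and the trace of I_U as a linear operator on M_N(ℂ) equals N. -/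
open Matrix

/-- For a unitary `U` with no zero entries, the Berezin transform `I = C_U⁻¹ ∘ D_U`
(a linear operator characterized by `C_U (I F) = D_U F`) is given entrywise by
`I(F)_{ij} = U_{ij}⁻¹ Σ_{k,l} U_{il} U_{kj} conj(U_{kl}) F_{kl}`, and its trace is `N`. -/
theorem stmt3 {N : ℕ} (U : Matrix (Fin N) (Fin N) ℂ)
    (hU : Uᴴ * U = 1) (hNZ : ∀ i j, U i j ≠ 0)
    (I : Matrix (Fin N) (Fin N) ℂ →ₗ[ℂ] Matrix (Fin N) (Fin N) ℂ)
    (hI : ∀ F, Cmap U (I F) = Dmap U F) :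
    (∀ (F : Matrix (Fin N) (Fin N) ℂ) (i j : Fin N),
        I F i j = (U i j)⁻¹ * ∑ k, ∑ l, U i l * U k j * (starRingEnd ℂ) (U k l) * F k l) ∧
    LinearMap.trace ℂ (Matrix (Fin N) (Fin N) ℂ) I = (N : ℂ) := by
  have key : ∀ (F : Matrix (Fin N) (Fin N) ℂ) (i j : Fin N),
      I F i j = (U i j)⁻¹ * ∑ k, ∑ l, U i l * U k j * (starRingEnd ℂ) (U k l) * F k l := by
    intro F i j
    have h1 : Matrix.hadamard (I F) U = Dmap U F * U := by
      calc Matrix.hadamard (I F) U = Matrix.hadamard (I F) U * (Uᴴ * U) := by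
            rw [hU, mul_one]
        _ = Cmap U (I F) * U := by rw [Cmap, mul_assoc]
        _ = Dmap U F * U := by rw [hI]
    have h2 : I F i j * U i j = (Dmap U F * U) i j := by
      have := congrFun (congrFun h1 i) j
      simpa [Matrix.hadamard] using this
    have h3 : (Dmap U F * U) i j
        = ∑ k, ∑ l, U i l * U k j * (starRingEnd ℂ) (U k l) * F k l := by
      rw [Dmap, mul_assoc, Matrix.mul_apply]
      rw [Finset.sum_comm]
      refine Finset.sum_congr rfl fun l _ => ?_
      rw [Matrix.mul_apply, Finset.mul_sum]
      refine Finset.sum_congr rfl fun k _ => ?_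
      simp only [Matrix.conjTranspose_apply, Matrix.hadamard_apply, Matrix.map_apply,
        star_mul', RingHom.id_apply, Complex.star_def, Complex.conj_conj]
      ring
    field_simp [hNZ i j]
    rw [h2, h3]
  refine ⟨key, ?_⟩
  classical
  rw [LinearMap.trace_eq_matrix_trace ℂ (Matrix.stdBasis ℂ (Fin N) (Fin N)) I]
  rw [Matrix.trace]
  have hdiag : ∀ p : Fin N × Fin N,
      (LinearMap.toMatrix (Matrix.stdBasis ℂ (Fin N) (Fin N))
        (Matrix.stdBasis ℂ (Fin N) (Fin N)) I).diag p
      = U p.1 p.2 * (starRingEnd ℂ) (U p.1 p.2) := by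
    rintro ⟨i, j⟩
    rw [Matrix.diag, LinearMap.toMatrix_apply]
    have hrepr : ∀ (M : Matrix (Fin N) (Fin N) ℂ),
        (Matrix.stdBasis ℂ (Fin N) (Fin N)).repr M (i, j) = M i j := by
      intro M; simp [Matrix.stdBasis, Matrix.ofLinearEquiv]
    rw [hrepr, Matrix.stdBasis_eq_single, key]
    have hsum : ∑ k, ∑ l, U i l * U k j * (starRingEnd ℂ) (U k l) * single i j (1:ℂ) k l
        = U i j * U i j * (starRingEnd ℂ) (U i j) := by
      simp [Matrix.single, ite_and, mul_ite, Finset.sum_ite_eq, Finset.sum_ite_eq']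
    rw [hsum]
    field_simp [hNZ i j]
  simp only [hdiag]
  rw [Fintype.sum_prod_type]
  have hcol : ∀ j : Fin N, ∑ i, U i j * (starRingEnd ℂ) (U i j) = 1 := by
    intro j
    have := congrFun (congrFun hU j) j
    simpa [Matrix.mul_apply, Matrix.conjTranspose_apply, mul_comm] using this
  calc ∑ i, ∑ j, U i j * (starRingEnd ℂ) (U i j)
      = ∑ j, ∑ i, U i j * (starRingEnd ℂ) (U i j) := Finset.sum_comm
    _ = ∑ _j : Fin N, (1 : ℂ) := Finset.sum_congr rfl fun j _ => hcol j
    _ = N := by simp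
end

section
/- For a unitary U with no zero entries, C_U(F) is antihermitian if and only if F = −I_U(conj(F)), and C_U(F) is hermitian if and only if F = I_U(conj(F)). -/
open Matrix

lemma Cmap_inj {N : ℕ} (U : Matrix (Fin N) (Fin N) ℂ)
    (hU : Uᴴ * U = 1) (hNZ : ∀ i j, U i j ≠ 0)
    {A B : Matrix (Fin N) (Fin N) ℂ} (h : Cmap U A = Cmap U B) : A = B := by
  have h2 : Matrix.hadamard A U = Matrix.hadamard B U := by
    have := congrArg (· * U) h
    simpa [Cmap, Matrix.mul_assoc, hU] using this
  ext i j
  have := congrFun (congrFun h2 i) j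
  simp only [Matrix.hadamard_apply] at this
  exact mul_right_cancel₀ (hNZ i j) this

lemma Cmap_neg {N : ℕ} (U A : Matrix (Fin N) (Fin N) ℂ) :
    Cmap U (-A) = -(Cmap U A) := by
  simp [Cmap, Matrix.hadamard, Matrix.neg_mul]
  ext i j
  simp [Matrix.mul_apply, Matrix.of_apply, neg_mul, Finset.sum_neg_distrib]

lemma conjT_Cmap {N : ℕ} (U F : Matrix (Fin N) (Fin N) ℂ) :
    (Cmap U F)ᴴ = Dmap U (F.map (starRingEnd ℂ)) := by
  have : (F.map (starRingEnd ℂ)).map (starRingEnd ℂ) = F := by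
    ext i j; simp
  simp [Cmap, Dmap, Matrix.conjTranspose_mul, this]

/-- For a unitary `U` with no zero entries and the Berezin transform `I = C_U⁻¹ ∘ D_U`:
`C_U(F)` is antihermitian iff `F = -I(conj F)`, and hermitian iff `F = I(conj F)`. -/
theorem stmt4 {N : ℕ} (U : Matrix (Fin N) (Fin N) ℂ)
    (hU : Uᴴ * U = 1) (hNZ : ∀ i j, U i j ≠ 0)
    (I : Matrix (Fin N) (Fin N) ℂ → Matrix (Fin N) (Fin N) ℂ)
    (hI : ∀ F, Cmap U (I F) = Dmap U F)
    (F : Matrix (Fin N) (Fin N) ℂ) :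
    ((Cmap U F)ᴴ = -(Cmap U F) ↔ F = -(I (F.map (starRingEnd ℂ)))) ∧
    ((Cmap U F)ᴴ = Cmap U F ↔ F = I (F.map (starRingEnd ℂ))) := by
  have key : (Cmap U F)ᴴ = Cmap U (I (F.map (starRingEnd ℂ))) := by
    rw [conjT_Cmap, hI]
  constructor
  · constructor
    · intro h
      rw [key] at h
      have := Cmap_inj U hU hNZ (h.trans (Cmap_neg U F).symm)
      rw [← neg_eq_iff_eq_neg] at this
      exact this.symm
    · intro h
      rw [key, ← Cmap_neg]
      exact congrArg (Cmap U) (neg_eq_iff_eq_neg.mp h.symm)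
  · constructor
    · intro h
      rw [key] at h
      exact (Cmap_inj U hU hNZ h).symm
    · intro h
      rw [key]
      exact congrArg (Cmap U) h.symm
end

section
/- For a unitary U with no zero entries: F = I_U(G) if and only if conj(G) = I_U(conj(F)). -/
open Matrix

lemma map_conj_conj {N : ℕ} (M : Matrix (Fin N) (Fin N) ℂ) :
    (M.map (starRingEnd ℂ)).map (starRingEnd ℂ) = M := by
  ext i j; simp

lemma swap_conj {N : ℕ} (U : Matrix (Fin N) (Fin N) ℂ) {F G : Matrix (Fin N) (Fin N) ℂ}
    (h : Cmap U F = Dmap U G) :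
    Cmap U (G.map (starRingEnd ℂ)) = Dmap U (F.map (starRingEnd ℂ)) := by
  ext i j
  have key := congrArg (starRingEnd ℂ) (congrFun (congrFun h j) i)
  simp only [Cmap, Dmap, Matrix.mul_apply, Matrix.hadamard, Matrix.conjTranspose_apply,
    Matrix.map_apply, Matrix.of_apply, map_sum, Complex.star_def, _root_.map_mul,
    Complex.conj_conj] at key ⊢
  refine (Finset.sum_congr rfl fun k _ => ?_).trans
    (key.symm.trans (Finset.sum_congr rfl fun k _ => ?_)) <;>
    ring

/-- For a unitary `U` with no zero entries and the Berezin transform `I = C_U⁻¹ ∘ D_U`: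
`F = I(G)` iff `conj(G) = I(conj(F))`. -/
theorem stmt5 {N : ℕ} (U : Matrix (Fin N) (Fin N) ℂ)
    (hU : Uᴴ * U = 1) (hNZ : ∀ i j, U i j ≠ 0)
    (I : Matrix (Fin N) (Fin N) ℂ → Matrix (Fin N) (Fin N) ℂ)
    (hI : ∀ F, Cmap U (I F) = Dmap U F)
    (F G : Matrix (Fin N) (Fin N) ℂ) :
    F = I G ↔ G.map (starRingEnd ℂ) = I (F.map (starRingEnd ℂ)) := by
  have key : ∀ A B : Matrix (Fin N) (Fin N) ℂ, A = I B ↔ Cmap U A = Dmap U B := by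
    intro A B
    constructor
    · rintro rfl; exact hI B
    · intro h; exact Cmap_inj U hU hNZ (h.trans (hI B).symm)
  rw [key, key]
  constructor
  · exact swap_conj U
  · intro h
    have h2 := swap_conj U h
    rwa [map_conj_conj, map_conj_conj] at h2
end

section
/- For unitary matrices U (N×N) and V (M×M) with no zero entries, the Berezin transform respects Kronecker products: I_{U⊗V}(F⊗G) = I_U(F) ⊗ I_V(G) for all F ∈ M_N(ℂ), G ∈ M_M(ℂ); likewise C_{U⊗V}(F⊗G) = C_U(F)⊗C_V(G) and D_{U⊗V}(F⊗G) = D_U(F)⊗D_V(G). -/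
open Matrix
open scoped Kronecker

lemma kron_conjT {n m : Type*} (A : Matrix n n ℂ) (B : Matrix m m ℂ) :
    (A ⊗ₖ B)ᴴ = Aᴴ ⊗ₖ Bᴴ := by
  ext ⟨i, j⟩ ⟨k, l⟩
  simp [Matrix.conjTranspose_apply, Matrix.kroneckerMap_apply, _root_.map_mul]

lemma kron_hadamard {n m : Type*} (A B : Matrix n n ℂ) (C D : Matrix m m ℂ) :
    Matrix.hadamard (A ⊗ₖ C) (B ⊗ₖ D) = Matrix.hadamard A B ⊗ₖ Matrix.hadamard C D := by
  ext ⟨i, j⟩ ⟨k, l⟩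
  simp [Matrix.hadamard_apply, Matrix.kroneckerMap_apply]
  ring

lemma kron_map_conj {n m : Type*} (A : Matrix n n ℂ) (B : Matrix m m ℂ) :
    (A ⊗ₖ B).map (starRingEnd ℂ) = A.map (starRingEnd ℂ) ⊗ₖ B.map (starRingEnd ℂ) := by
  ext ⟨i, j⟩ ⟨k, l⟩
  simp [Matrix.kroneckerMap_apply, _root_.map_mul]

lemma Cmap_inj_s9 {n : Type*} [Fintype n] [DecidableEq n] (U : Matrix n n ℂ)
    (hU : Uᴴ * U = 1) (hUnz : ∀ i j, U i j ≠ 0) {X Y : Matrix n n ℂ}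
    (h : Cmap U X = Cmap U Y) : X = Y := by
  have h2 : Matrix.hadamard X U = Matrix.hadamard Y U := by
    have := congrArg (· * U) h
    simpa [Cmap, Matrix.mul_assoc, hU] using this
  ext i j
  have := congrFun (congrFun h2 i) j
  simp only [Matrix.hadamard_apply] at this
  exact mul_right_cancel₀ (hUnz i j) this

/-- The Berezin transform respects Kronecker products:
`C_{U⊗V}(F⊗G) = C_U F ⊗ C_V G`, `D_{U⊗V}(F⊗G) = D_U F ⊗ D_V G`, and
`I_{U⊗V}(F⊗G) = I_U F ⊗ I_V G`, where `I_W` is characterized by `C_W (I_W X) = D_W X`. -/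
theorem stmt9 {N M : ℕ}
    (U : Matrix (Fin N) (Fin N) ℂ) (V : Matrix (Fin M) (Fin M) ℂ)
    (hU : Uᴴ * U = 1) (hV : Vᴴ * V = 1)
    (hUnz : ∀ i j, U i j ≠ 0) (hVnz : ∀ i j, V i j ≠ 0)
    (IU : Matrix (Fin N) (Fin N) ℂ → Matrix (Fin N) (Fin N) ℂ)
    (IV : Matrix (Fin M) (Fin M) ℂ → Matrix (Fin M) (Fin M) ℂ)
    (IUV : Matrix (Fin N × Fin M) (Fin N × Fin M) ℂ →
           Matrix (Fin N × Fin M) (Fin N × Fin M) ℂ)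
    (hIU : ∀ F, Cmap U (IU F) = Dmap U F)
    (hIV : ∀ G, Cmap V (IV G) = Dmap V G)
    (hIUV : ∀ X, Cmap (U ⊗ₖ V) (IUV X) = Dmap (U ⊗ₖ V) X) :
    ∀ (F : Matrix (Fin N) (Fin N) ℂ) (G : Matrix (Fin M) (Fin M) ℂ),
      Cmap (U ⊗ₖ V) (F ⊗ₖ G) = Cmap U F ⊗ₖ Cmap V G ∧
      Dmap (U ⊗ₖ V) (F ⊗ₖ G) = Dmap U F ⊗ₖ Dmap V G ∧
      IUV (F ⊗ₖ G) = IU F ⊗ₖ IV G := by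
  intro F G
  have hC : ∀ (F : Matrix (Fin N) (Fin N) ℂ) (G : Matrix (Fin M) (Fin M) ℂ),
      Cmap (U ⊗ₖ V) (F ⊗ₖ G) = Cmap U F ⊗ₖ Cmap V G := by
    intro F G
    simp only [Cmap]
    rw [kron_conjT, kron_hadamard, Matrix.mul_kronecker_mul]
  have hD : Dmap (U ⊗ₖ V) (F ⊗ₖ G) = Dmap U F ⊗ₖ Dmap V G := by
    simp only [Dmap]
    rw [kron_map_conj, kron_hadamard, kron_conjT, Matrix.mul_kronecker_mul]
  refine ⟨hC F G, hD, ?_⟩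
  have hUVu : (U ⊗ₖ V)ᴴ * (U ⊗ₖ V) = 1 := by
    rw [kron_conjT, ← Matrix.mul_kronecker_mul, hU, hV, Matrix.one_kronecker_one]
  have hUVnz : ∀ (i j : Fin N × Fin M), (U ⊗ₖ V) i j ≠ 0 := by
    rintro ⟨i, k⟩ ⟨j, l⟩
    exact mul_ne_zero (hUnz i j) (hVnz k l)
  apply Cmap_inj_s9 (U ⊗ₖ V) hUVu hUVnz
  rw [hIUV, hD, ← hIU, ← hIV, hC]
end

section
/- If U is a real orthogonal N×N matrix with no zero entries, then the Berezin transform I_U is self-adjoint with respect to ⟨·,·⟩_U; consequently its spectrum consists only of +1 and −1, with +1 occurring with multiplicity N(N+1)/2 and −1 with multiplicity N(N−1)/2. -/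
open Matrix

namespace Stmt11Aux

/-- Transpose as a linear map. -/
def tLin (N : ℕ) : Matrix (Fin N) (Fin N) ℂ →ₗ[ℂ] Matrix (Fin N) (Fin N) ℂ where
  toFun M := Mᵀ
  map_add' M M' := Matrix.transpose_add M M'
  map_smul' c M := Matrix.transpose_smul c M

theorem tLin_apply {N : ℕ} (M : Matrix (Fin N) (Fin N) ℂ) : tLin N M = Mᵀ := rfl

theorem mem_kerP {N : ℕ} (M : Matrix (Fin N) (Fin N) ℂ) :
    M ∈ LinearMap.ker (LinearMap.id - tLin N) ↔ Mᵀ = M := by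
  rw [LinearMap.mem_ker, LinearMap.sub_apply, LinearMap.id_apply, tLin_apply, sub_eq_zero]
  exact comm

theorem mem_kerQ {N : ℕ} (M : Matrix (Fin N) (Fin N) ℂ) :
    M ∈ LinearMap.ker (LinearMap.id + tLin N) ↔ Mᵀ = -M := by
  rw [LinearMap.mem_ker, LinearMap.add_apply, LinearMap.id_apply, tLin_apply]
  constructor
  · intro h; exact eq_neg_of_add_eq_zero_right h
  · intro h; rw [h, add_neg_cancel]

/-- Symmetric matrices are parametrized by entries on/above the diagonal. -/
noncomputable def symEquiv (N : ℕ) :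
    LinearMap.ker (LinearMap.id - tLin N) ≃ₗ[ℂ] ({p : Fin N × Fin N // p.1 ≤ p.2} → ℂ) where
  toFun M p := M.1 p.1.1 p.1.2
  map_add' M M' := rfl
  map_smul' c M := rfl
  invFun f := ⟨Matrix.of fun i j =>
      if h : i ≤ j then f ⟨(i, j), h⟩ else f ⟨(j, i), le_of_not_ge h⟩, by
    rw [mem_kerP]
    ext i j
    simp only [Matrix.transpose_apply, Matrix.of_apply]
    rcases lt_trichotomy i j with h | h | h
    · rw [dif_neg (not_le.mpr h), dif_pos h.le]
    · subst h; rw [dif_pos le_rfl]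
    · rw [dif_pos h.le, dif_neg (not_le.mpr h)]⟩
  left_inv M := by
    obtain ⟨M, hM⟩ := M
    rw [mem_kerP] at hM
    apply Subtype.ext
    ext i j
    simp only [Matrix.of_apply]
    by_cases h : i ≤ j
    · rw [dif_pos h]
    · rw [dif_neg h]
      exact (congrFun (congrFun hM i) j : M j i = M i j)
  right_inv f := by
    funext p
    obtain ⟨⟨i, j⟩, h⟩ := p
    simp only [Matrix.of_apply, dif_pos h]

theorem finrank_sym (N : ℕ) :
    Module.finrank ℂ (LinearMap.ker (LinearMap.id - tLin N)) = N * (N + 1) / 2 := by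
  rw [(symEquiv N).finrank_eq, Module.finrank_pi]
  rw [← Fintype.card_congr (Sym2.sortEquiv (α := Fin N)), Sym2.card]
  simp [Nat.choose_two_right, Nat.mul_comm]

theorem range_Q (N : ℕ) :
    LinearMap.range (LinearMap.id + tLin N) = LinearMap.ker (LinearMap.id - tLin N) := by
  apply le_antisymm
  · rintro x ⟨F, rfl⟩
    rw [mem_kerP, LinearMap.add_apply, LinearMap.id_apply, tLin_apply, Matrix.transpose_add,
      Matrix.transpose_transpose, add_comm]
  · intro S hS
    rw [mem_kerP] at hS
    refine ⟨(2⁻¹ : ℂ) • S, ?_⟩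
    rw [LinearMap.add_apply, LinearMap.id_apply, tLin_apply, Matrix.transpose_smul, hS,
      ← add_smul]
    norm_num

theorem finrank_asym (N : ℕ) :
    Module.finrank ℂ (LinearMap.ker (LinearMap.id + tLin N)) = N * (N - 1) / 2 := by
  have h := LinearMap.finrank_range_add_finrank_ker (LinearMap.id + tLin N)
  rw [range_Q, finrank_sym] at h
  have hV : Module.finrank ℂ (Matrix (Fin N) (Fin N) ℂ) = N * N := by
    rw [Module.finrank_matrix]
    simp
  rw [hV] at h
  have h1 : N * (N + 1) = N * N + N := by ring
  have h2 : N * (N - 1) + N = N * N := by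
    rcases N with _ | m
    · rfl
    · simp only [Nat.add_sub_cancel]; ring
  have d1 : 2 ∣ N * (N + 1) := (Nat.even_mul_succ_self N).two_dvd
  have d2 : 2 ∣ N * (N - 1) := by
    rcases N with _ | m
    · exact ⟨0, rfl⟩
    · simp only [Nat.add_sub_cancel, Nat.mul_comm]
      exact (Nat.even_mul_succ_self m).two_dvd
  omega

end Stmt11Aux
open Matrix

namespace Stmt11Aux

/-- The linear equivalence `F ↦ Uᵀ * (F ⊙ U)`. -/
noncomputable def hadMulEquiv {N : ℕ} (U : Matrix (Fin N) (Fin N) ℂ)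
    (hNZ : ∀ i j, U i j ≠ 0) (hUtU : Uᵀ * U = 1) (hUUt : U * Uᵀ = 1) :
    Matrix (Fin N) (Fin N) ℂ ≃ₗ[ℂ] Matrix (Fin N) (Fin N) ℂ where
  toFun F := Uᵀ * Matrix.hadamard F U
  map_add' F G := by rw [Matrix.add_hadamard, Matrix.mul_add]
  map_smul' c F := by rw [RingHom.id_apply, Matrix.smul_hadamard, Matrix.mul_smul]
  invFun G := Matrix.hadamard (U * G) (Matrix.of fun i j => (U i j)⁻¹)
  left_inv F := by
    dsimp only
    have h1 : U * (Uᵀ * Matrix.hadamard F U) = Matrix.hadamard F U := by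
      rw [← Matrix.mul_assoc, hUUt, Matrix.one_mul]
    rw [h1]
    ext i j
    simp only [Matrix.hadamard_apply, Matrix.of_apply]
    exact mul_inv_cancel_right₀ (hNZ i j) (F i j)
  right_inv G := by
    dsimp only
    have h1 : Matrix.hadamard (Matrix.hadamard (U * G) (Matrix.of fun i j => (U i j)⁻¹)) U
        = U * G := by
      ext i j
      simp only [Matrix.hadamard_apply, Matrix.of_apply]
      exact inv_mul_cancel_right₀ (hNZ i j) ((U * G) i j)
    rw [h1, ← Matrix.mul_assoc, hUtU, Matrix.one_mul]

theorem hadMulEquiv_apply {N : ℕ} (U : Matrix (Fin N) (Fin N) ℂ)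
    (hNZ : ∀ i j, U i j ≠ 0) (hUtU : Uᵀ * U = 1) (hUUt : U * Uᵀ = 1)
    (F : Matrix (Fin N) (Fin N) ℂ) :
    hadMulEquiv U hNZ hUtU hUUt F = Uᵀ * Matrix.hadamard F U := rfl

end Stmt11Aux

open Stmt11Aux

/-- If `U` is a real orthogonal `N×N` matrix with no zero entries, the Berezin transform
`I = C_U⁻¹ ∘ D_U` is self-adjoint w.r.t. `⟨·,·⟩_U`; its eigenvalues are only `±1`,
with `+1` of multiplicity `N(N+1)/2` and `-1` of multiplicity `N(N-1)/2`. -/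
theorem stmt11 {N : ℕ} (U : Matrix (Fin N) (Fin N) ℂ)
    (hU : Uᴴ * U = 1) (hreal : ∀ i j, (U i j).im = 0) (hNZ : ∀ i j, U i j ≠ 0)
    (I : Matrix (Fin N) (Fin N) ℂ →ₗ[ℂ] Matrix (Fin N) (Fin N) ℂ)
    (hI : ∀ F, Cmap U (I F) = Dmap U F) :
    (∀ F G : Matrix (Fin N) (Fin N) ℂ, wip U (I F) G = wip U F (I G)) ∧
    (∀ μ : ℂ, Module.End.HasEigenvalue I μ → μ = 1 ∨ μ = -1) ∧
    Module.finrank ℂ (Module.End.eigenspace I (1 : ℂ)) = N * (N + 1) / 2 ∧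
    Module.finrank ℂ (Module.End.eigenspace I (-1 : ℂ)) = N * (N - 1) / 2 := by
  classical
  have hconj : ∀ i j, (starRingEnd ℂ) (U i j) = U i j :=
    fun i j => Complex.conj_eq_iff_im.mpr (hreal i j)
  have hUt : Uᴴ = Uᵀ := by
    ext i j
    simp only [Matrix.conjTranspose_apply, Matrix.transpose_apply, RCLike.star_def]
    exact hconj j i
  have hUtU : Uᵀ * U = 1 := hUt ▸ hU
  have hUUt : U * Uᵀ = 1 := mul_eq_one_comm.mp hUtU
  have hL : ∀ X : Matrix (Fin N) (Fin N) ℂ, U * (Uᵀ * X) = X := fun X => by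
    rw [← Matrix.mul_assoc, hUUt, Matrix.one_mul]
  have hL' : ∀ X : Matrix (Fin N) (Fin N) ℂ, Uᵀ * (U * X) = X := fun X => by
    rw [← Matrix.mul_assoc, hUtU, Matrix.one_mul]
  have hinj : ∀ {X Y : Matrix (Fin N) (Fin N) ℂ},
      Matrix.hadamard X U = Matrix.hadamard Y U → X = Y := by
    intro X Y h
    ext i j
    have h2 : X i j * U i j = Y i j * U i j := congrFun (congrFun h i) j
    exact mul_right_cancel₀ (hNZ i j) h2
  have hkey : ∀ F, Matrix.hadamard (I F) U = U * (Matrix.hadamard F U)ᵀ * U := by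
    intro F
    have h := hI F
    unfold Cmap Dmap at h
    have h2 : (Matrix.hadamard (F.map (starRingEnd ℂ)) U)ᴴ = (Matrix.hadamard F U)ᵀ := by
      ext i j
      simp only [Matrix.conjTranspose_apply, Matrix.hadamard_apply, Matrix.map_apply,
        Matrix.transpose_apply, RCLike.star_def]
      rw [_root_.map_mul, Complex.conj_conj, hconj]
    rw [h2, hUt] at h
    calc Matrix.hadamard (I F) U = Matrix.hadamard (I F) U * (Uᵀ * U) := by
          rw [hUtU, Matrix.mul_one]
    _ = Matrix.hadamard (I F) U * Uᵀ * U := by rw [Matrix.mul_assoc]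
    _ = U * (Matrix.hadamard F U)ᵀ * U := by rw [h]
  have hII : ∀ F, I (I F) = F := by
    intro F
    apply hinj
    rw [hkey, hkey]
    rw [Matrix.transpose_mul, Matrix.transpose_mul, Matrix.transpose_transpose, hL,
      Matrix.mul_assoc, hUtU, Matrix.mul_one]
  have hiff1 : ∀ F : Matrix (Fin N) (Fin N) ℂ,
      I F = F ↔ (Uᵀ * Matrix.hadamard F U)ᵀ = Uᵀ * Matrix.hadamard F U := by
    intro F
    rw [Matrix.transpose_mul, Matrix.transpose_transpose]
    constructor
    · intro h
      have hA := hkey F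
      rw [h] at hA
      -- hA : F ⊙ U = U * (F ⊙ U)ᵀ * U
      conv_rhs => rw [hA]
      rw [Matrix.mul_assoc U _ U, hL']
    · intro h
      apply hinj
      rw [hkey, Matrix.mul_assoc, h, hL]
  have hiff2 : ∀ F : Matrix (Fin N) (Fin N) ℂ,
      I F = -F ↔ (Uᵀ * Matrix.hadamard F U)ᵀ = -(Uᵀ * Matrix.hadamard F U) := by
    intro F
    rw [Matrix.transpose_mul, Matrix.transpose_transpose]
    constructor
    · intro h
      have hA := hkey F
      rw [h] at hA
      -- hA : (-F) ⊙ U = U * (F ⊙ U)ᵀ * U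
      have hA' : -(Matrix.hadamard F U) = U * (Matrix.hadamard F U)ᵀ * U := by
        rw [← hA]; ext i j; simp [Matrix.hadamard_apply]
      have : Matrix.hadamard F U = -(U * (Matrix.hadamard F U)ᵀ * U) := by
        rw [← hA', neg_neg]
      conv_rhs => rw [this]
      rw [Matrix.mul_neg, Matrix.mul_assoc U _ U, hL', neg_neg]
    · intro h
      apply hinj
      have hne : Matrix.hadamard (-F) U = -(Matrix.hadamard F U) := by
        ext i j; simp [Matrix.hadamard_apply]
      rw [hkey, hne, Matrix.mul_assoc, h, Matrix.mul_neg, hL]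
  have hwip : ∀ F G : Matrix (Fin N) (Fin N) ℂ,
      wip U F G = Matrix.trace (Matrix.hadamard F U * (Matrix.hadamard G U)ᴴ) := by
    intro F G
    unfold wip
    simp only [Matrix.trace, Matrix.diag_apply, Matrix.mul_apply, Matrix.conjTranspose_apply,
      Matrix.hadamard_apply, RCLike.star_def]
    refine Finset.sum_congr rfl fun i _ => Finset.sum_congr rfl fun j _ => ?_
    have h2 : ((Complex.normSq (U i j) : ℝ) : ℂ) = U i j * U i j := by
      rw [← Complex.mul_conj, hconj]
    rw [_root_.map_mul, hconj, h2]
    ring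
  have tr_key : ∀ A C : Matrix (Fin N) (Fin N) ℂ,
      Matrix.trace (U * Aᵀ * U * C) = Matrix.trace (A * (Uᵀ * ((Cᵀ * Uᵀ)))) := by
    intro A C
    have l1 : Matrix.trace (U * Aᵀ * U * C) = Matrix.trace (Aᵀ * (U * (C * U))) := by
      rw [show U * Aᵀ * U * C = U * (Aᵀ * (U * C)) by simp only [Matrix.mul_assoc],
        Matrix.trace_mul_comm]
      simp only [Matrix.mul_assoc]
    have l2 : Matrix.trace (A * (Uᵀ * (Cᵀ * Uᵀ))) = Matrix.trace (Aᵀ * (U * (C * U))) := by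
      rw [← Matrix.trace_transpose (A * (Uᵀ * (Cᵀ * Uᵀ)))]
      simp only [Matrix.transpose_mul, Matrix.transpose_transpose]
      rw [Matrix.trace_mul_comm]
      simp only [Matrix.mul_assoc]
    rw [l1, l2]
  have hTH : ∀ B : Matrix (Fin N) (Fin N) ℂ, (Bᵀ)ᴴ = (Bᴴ)ᵀ := fun B => by ext i j; rfl
  have hsa : ∀ F G : Matrix (Fin N) (Fin N) ℂ, wip U (I F) G = wip U F (I G) := by
    intro F G
    rw [hwip, hwip, hkey F, hkey G]
    have hC : (U * (Matrix.hadamard G U)ᵀ * U)ᴴ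
        = Uᵀ * (((Matrix.hadamard G U)ᴴ)ᵀ * Uᵀ) := by
      rw [Matrix.conjTranspose_mul, Matrix.conjTranspose_mul, hUt, hTH]
    rw [hC]
    exact tr_key (Matrix.hadamard F U) ((Matrix.hadamard G U)ᴴ)
  have heig : ∀ μ : ℂ, Module.End.HasEigenvalue I μ → μ = 1 ∨ μ = -1 := by
    intro μ hμ
    obtain ⟨v, hv⟩ := hμ.exists_hasEigenvector
    have h1 : I v = μ • v := hv.apply_eq_smul
    have h2 : v = (μ * μ) • v := by
      conv_lhs => rw [← hII v]
      rw [h1, I.map_smul, h1, smul_smul]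
    have h3 : (μ * μ - 1) • v = 0 := by
      rw [sub_smul, one_smul, ← h2, sub_self]
    rcases smul_eq_zero.mp h3 with h | h
    · exact mul_self_eq_one_iff.mp (by rw [← sub_eq_zero]; exact h)
    · exact absurd h hv.2
  refine ⟨hsa, heig, ?_, ?_⟩
  · -- eigenspace at 1
    set e := hadMulEquiv U hNZ hUtU hUUt with he
    have hmap : Submodule.map (e : Matrix (Fin N) (Fin N) ℂ →ₗ[ℂ] Matrix (Fin N) (Fin N) ℂ)
        (Module.End.eigenspace I 1) = LinearMap.ker (LinearMap.id - tLin N) := by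
      ext x
      rw [Submodule.mem_map_equiv, Module.End.mem_eigenspace_iff, one_smul, mem_kerP,
        hiff1 (e.symm x)]
      have hx : Uᵀ * Matrix.hadamard (e.symm x) U = x := e.apply_symm_apply x
      rw [hx]
    rw [LinearEquiv.finrank_eq (e.submoduleMap (Module.End.eigenspace I 1)), hmap, finrank_sym]
  · set e := hadMulEquiv U hNZ hUtU hUUt with he
    have hmap : Submodule.map (e : Matrix (Fin N) (Fin N) ℂ →ₗ[ℂ] Matrix (Fin N) (Fin N) ℂ)
        (Module.End.eigenspace I (-1)) = LinearMap.ker (LinearMap.id + tLin N) := by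
      ext x
      rw [Submodule.mem_map_equiv, Module.End.mem_eigenspace_iff, mem_kerQ]
      rw [show ((-1 : ℂ) • e.symm x) = -(e.symm x) by rw [neg_smul, one_smul]]
      rw [hiff2 (e.symm x)]
      have hx : Uᵀ * Matrix.hadamard (e.symm x) U = x := e.apply_symm_apply x
      rw [hx]
    rw [LinearEquiv.finrank_eq (e.submoduleMap (Module.End.eigenspace I (-1))), hmap,
      finrank_asym]
end

section
/- Let F be the character-table matrix of a finite abelian group G, with F_{i,j} a bihomomorphic symmetric matrix whose rows form the full character group. If bijections χ', χ'' of G satisfy F_{χ'(i), χ''(j)} = F_{i,j} for all i,j ∈ G, then χ' and χ'' are automorphisms of G. -/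
/-- For the character matrix `F` of a finite abelian group `G` (a symmetric nondegenerate
bicharacter), if bijections `χ'`, `χ''` of `G` satisfy `F (χ' i) (χ'' j) = F i j` for all
`i, j`, then `χ'` and `χ''` are automorphisms of `G` (additive maps). -/
theorem stmt13 {G : Type*} [AddCommGroup G] [Fintype G]
    (F : G → G → ℂ)
    (hb1 : ∀ i i' j, F (i + i') j = F i j * F i' j)
    (hb2 : ∀ i j j', F i (j + j') = F i j * F i j')
    (hsym : ∀ i j, F i j = F j i)
    (hcols : ∀ j j', (∀ i, F i j = F i j') → j = j')
    (χ' χ'' : G → G)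
    (hbij' : Function.Bijective χ') (hbij'' : Function.Bijective χ'')
    (heq : ∀ i j, F (χ' i) (χ'' j) = F i j) :
    (∀ a b, χ' (a + b) = χ' a + χ' b) ∧ (∀ a b, χ'' (a + b) = χ'' a + χ'' b) := by
  constructor
  · intro a b
    have hrows : ∀ j j', (∀ i, F j i = F j' i) → j = j' := by
      intro j j' h
      exact hcols j j' fun i => by rw [hsym, h, hsym]
    apply hrows
    intro i
    obtain ⟨i₀, rfl⟩ := hbij''.2 i
    rw [heq, hb1 (χ' a) (χ' b), heq, heq, hb1]
  · intro a b
    apply hcols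
    intro i
    obtain ⟨i₀, rfl⟩ := hbij'.2 i
    rw [heq, hb2, hb2, heq, heq]
end

section
/- For the unitary Fourier matrix U = (1/√N)·F of a finite abelian group G of order N, the N² matrices F_{:,s} F_{:,t}^T (outer products of columns), for s,t ∈ G, are eigenvectors of the Berezin transform I_U with eigenvalues F_{s,t}, and they are pairwise orthogonal with respect to the standard inner product tr(Y* X). Hence they form a complete eigenbasis of I_U. -/
open Matrix

/-- For the unitary Fourier matrix `U = (1/√N) F` of a finite abelian group `G` of order
`N`, the `N²` outer products of columns `F_{:,s} F_{:,t}ᵀ` are eigenvectors of the Berezin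
transform `I = C_U⁻¹ ∘ D_U` with eigenvalues `F_{s,t}`, pairwise orthogonal w.r.t. the
standard inner product; hence they form a complete eigenbasis of `I`. -/
theorem stmt18 {G : Type*} [AddCommGroup G] [Fintype G]
    (F : G → G → ℂ)
    (hb1 : ∀ i i' j, F (i + i') j = F i j * F i' j)
    (hb2 : ∀ i j j', F i (j + j') = F i j * F i j')
    (hsym : ∀ i j, F i j = F j i)
    (hmod : ∀ i j, ‖F i j‖ = 1)
    (hcols : ∀ j j', (∀ i, F i j = F i j') → j = j')
    (U : Matrix G G ℂ)
    (hUdef : U = (((Real.sqrt (Fintype.card G) : ℝ) : ℂ))⁻¹ • Matrix.of F)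
    (I : Matrix G G ℂ → Matrix G G ℂ)
    (hI : ∀ X, Cmap U (I X) = Dmap U X) :
    (∀ s t : G,
        I (Matrix.vecMulVec (fun i => F i s) (fun j => F j t))
          = F s t • Matrix.vecMulVec (fun i => F i s) (fun j => F j t)) ∧
    (∀ s t s' t' : G, (s, t) ≠ (s', t') →
        sip (Matrix.vecMulVec (fun i => F i s) (fun j => F j t))
            (Matrix.vecMulVec (fun i => F i s') (fun j => F j t')) = 0) ∧
    LinearIndependent ℂ
      (fun st : G × G => Matrix.vecMulVec (fun i => F i st.1) (fun j => F j st.2)) ∧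
    Submodule.span ℂ
      (Set.range fun st : G × G =>
        Matrix.vecMulVec (fun i => F i st.1) (fun j => F j st.2)) = ⊤ := by
  classical
  -- basic facts
  have hFne : ∀ i j, F i j ≠ 0 := by
    intro i j h
    have := hmod i j; rw [h] at this; simp at this
  have hF10 : ∀ i, F i 0 = 1 := by
    intro i
    have h := hb2 i 0 0
    rw [add_zero] at h
    exact mul_left_cancel₀ (hFne i 0) (by rw [mul_one]; exact h.symm)
  have hinv : ∀ i j, F i j * F i (-j) = 1 := by
    intro i j
    rw [← hb2 i j (-j)]; simp [hF10]
  have hconj : ∀ i j, star (F i j) = F i (-j) := by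
    intro i j
    have h2 : F i j * star (F i j) = 1 := by
      rw [Complex.star_def, Complex.mul_conj, ← Complex.sq_norm, hmod]
      norm_num
    have h3 := inv_eq_of_mul_eq_one_right (hinv i j)
    have h4 := inv_eq_of_mul_eq_one_right h2
    rw [← h4]; exact h3
  have hconj2 : ∀ i j, star (F i j) = F j (-i) := by
    intro i j; rw [hsym i j]; exact hconj j i
  -- the character sum
  have hsum : ∀ c : G, ∑ i, F i c = if c = 0 then (Fintype.card G : ℂ) else 0 := by
    intro c
    split_ifs with hc
    · subst hc; simp [hF10]
    · obtain ⟨i0, hi0⟩ : ∃ i0, F i0 c ≠ 1 := by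
        by_contra h
        push_neg at h
        exact hc (hcols c 0 fun i => by rw [h i, hF10])
      have hshift : ∑ i, F i c = F i0 c * ∑ i, F i c := by
        calc ∑ i, F i c = ∑ i, F (i0 + i) c :=
              (Fintype.sum_equiv (Equiv.addLeft i0) _ _ fun i => rfl).symm
          _ = ∑ i, F i0 c * F i c := by simp [hb1]
          _ = F i0 c * ∑ i, F i c := (Finset.mul_sum _ _ _).symm
      have h0 : (F i0 c - 1) * ∑ i, F i c = 0 := by ring_nf; linear_combination -hshift
      rcases mul_eq_zero.mp h0 with h | h
      · exact absurd (by linear_combination h) hi0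
      · exact h
  -- the scalar
  have hU : ∀ i j, U i j = ((Real.sqrt (Fintype.card G) : ℝ) : ℂ)⁻¹ * F i j := by
    intro i j; rw [hUdef]; simp
  set q : ℂ := ((Real.sqrt (Fintype.card G) : ℝ) : ℂ)⁻¹ with hqdef
  have hNne : (Fintype.card G : ℂ) ≠ 0 := by
    exact_mod_cast Nat.cast_ne_zero.mpr Fintype.card_ne_zero
  have hNpos : (0:ℝ) < (Fintype.card G : ℝ) := by
    exact_mod_cast Fintype.card_pos
  have hss : Real.sqrt (Fintype.card G) * Real.sqrt (Fintype.card G)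
      = (Fintype.card G : ℝ) := Real.mul_self_sqrt (le_of_lt hNpos)
  have hsne : Real.sqrt (Fintype.card G) ≠ 0 := by
    rw [Real.sqrt_ne_zero']; exact hNpos
  have hqq : q * q * (Fintype.card G : ℂ) = 1 := by
    rw [hqdef, ← Complex.ofReal_inv,
      show ((Fintype.card G : ℕ) : ℂ) = ((Fintype.card G : ℝ) : ℂ) by push_cast; ring,
      ← Complex.ofReal_mul, ← Complex.ofReal_mul, ← Complex.ofReal_one]
    congr 1
    rw [← hss]
    field_simp
    rw [Real.sqrt_sq (Real.sqrt_nonneg _)]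
  have hqstar : star q = q := by
    rw [hqdef]; simp
  have hqne : q ≠ 0 := by
    rw [hqdef]
    apply inv_ne_zero
    simpa using hsne
  have hCent : ∀ (X : Matrix G G ℂ) i k,
      Cmap U X i k = ∑ j, X i j * U i j * star (U k j) := by
    intro X i k
    simp [Cmap, Matrix.mul_apply, Matrix.hadamard_apply, Matrix.conjTranspose_apply]
  have hDent : ∀ (X : Matrix G G ℂ) i k,
      Dmap U X i k = ∑ j, U i j * (X k j * star (U k j)) := by
    intro X i k
    simp [Dmap, Matrix.mul_apply, Matrix.hadamard_apply, Matrix.conjTranspose_apply,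
      Matrix.map_apply, star_mul']
  -- entry computation for Cmap on scaled outer products
  have hL : ∀ s t i k,
      Cmap U (F s t • Matrix.vecMulVec (fun i => F i s) (fun j => F j t)) i k
        = F s t * F i s * (q * q) *
            (if t + (i + -k) = 0 then (Fintype.card G : ℂ) else 0) := by
    intro s t i k
    rw [hCent]
    have hpt : ∀ j, (F s t • Matrix.vecMulVec (fun i => F i s) (fun j => F j t)) i j
        * U i j * star (U k j)
        = (F s t * F i s * (q * q)) * F j (t + (i + -k)) := by
      intro j
      rw [Matrix.smul_apply, Matrix.vecMulVec_apply, hU, hU, star_mul', hqstar, hconj2 k j,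
        hsym i j, hb2 j t (i + -k), hb2 j i (-k), smul_eq_mul]
      ring
    rw [Finset.sum_congr rfl fun j _ => hpt j, ← Finset.mul_sum, hsum]
  -- entry computation for Dmap on outer products
  have hD : ∀ s t i k,
      Dmap U (Matrix.vecMulVec (fun i => F i s) (fun j => F j t)) i k
        = F k s * (q * q) *
            (if t + (i + -k) = 0 then (Fintype.card G : ℂ) else 0) := by
    intro s t i k
    rw [hDent]
    have hpt : ∀ j, U i j * ((Matrix.vecMulVec (fun i => F i s) (fun j => F j t)) k j
        * star (U k j))
        = (F k s * (q * q)) * F j (t + (i + -k)) := by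
      intro j
      rw [Matrix.vecMulVec_apply, hU, hU, star_mul', hqstar, hconj2 k j,
        hsym i j, hb2 j t (i + -k), hb2 j i (-k)]
      ring
    rw [Finset.sum_congr rfl fun j _ => hpt j, ← Finset.mul_sum, hsum]
  -- key identity
  have hkey : ∀ s t,
      Cmap U (F s t • Matrix.vecMulVec (fun i => F i s) (fun j => F j t))
        = Dmap U (Matrix.vecMulVec (fun i => F i s) (fun j => F j t)) := by
    intro s t
    ext i k
    rw [hL, hD]
    by_cases h : t + (i + -k) = 0
    · have hk : t + i = k := by
        have h2 : t + i - k = 0 := by rw [show t + i - k = t + (i + -k) by abel, h]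
        exact sub_eq_zero.mp h2
      subst hk
      rw [hb1 t i s, hsym t s]
    · rw [if_neg h]
      ring
  -- unitarity
  have hUU : Uᴴ * U = 1 := by
    ext j k
    rw [Matrix.mul_apply, Matrix.one_apply]
    have hpt : ∀ i, Uᴴ j i * U i k = (q * q) * F i (k + -j) := by
      intro i
      rw [Matrix.conjTranspose_apply, hU, hU, star_mul', hqstar, hconj i j, hb2 i k (-j)]
      ring
    rw [Finset.sum_congr rfl fun i _ => hpt i, ← Finset.mul_sum, hsum]
    by_cases h : k + -j = 0
    · rw [if_pos h, if_pos (add_neg_eq_zero.mp h).symm]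
      exact hqq
    · rw [if_neg h, if_neg (fun hh => h (by rw [hh]; simp)), mul_zero]
  -- injectivity of Cmap
  have hCinj : ∀ X Y : Matrix G G ℂ, Cmap U X = Cmap U Y → X = Y := by
    intro X Y h
    simp only [Cmap] at h
    have h3 : Matrix.hadamard X U * (Uᴴ * U) = Matrix.hadamard Y U * (Uᴴ * U) := by
      rw [← Matrix.mul_assoc, ← Matrix.mul_assoc, h]
    rw [hUU, Matrix.mul_one, Matrix.mul_one] at h3
    ext i j
    have h4 : X i j * U i j = Y i j * U i j := by
      have := congrFun (congrFun h3 i) j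
      simpa [Matrix.hadamard_apply] using this
    exact mul_right_cancel₀ (by rw [hU]; exact mul_ne_zero hqne (hFne i j)) h4
  have part1 : ∀ s t : G,
      I (Matrix.vecMulVec (fun i => F i s) (fun j => F j t))
        = F s t • Matrix.vecMulVec (fun i => F i s) (fun j => F j t) :=
    fun s t => hCinj _ _ ((hI _).trans (hkey s t).symm)
  -- the inner product
  have hsip : ∀ s t s' t',
      sip (Matrix.vecMulVec (fun i => F i s) (fun j => F j t))
          (Matrix.vecMulVec (fun i => F i s') (fun j => F j t'))
        = (if s + -s' = 0 then (Fintype.card G : ℂ) else 0) *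
            (if t + -t' = 0 then (Fintype.card G : ℂ) else 0) := by
    intro s t s' t'
    calc sip (Matrix.vecMulVec (fun i => F i s) (fun j => F j t))
          (Matrix.vecMulVec (fun i => F i s') (fun j => F j t'))
        = ∑ x : G, ∑ i : G,
            star ((Matrix.vecMulVec (fun i => F i s') (fun j => F j t')) i x) *
              ((Matrix.vecMulVec (fun i => F i s) (fun j => F j t)) i x) := by
          simp only [sip, Matrix.trace, Matrix.diag, Matrix.mul_apply, Matrix.conjTranspose_apply]
      _ = ∑ x : G, ∑ i : G, F i (s + -s') * F x (t + -t') := by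
          refine Finset.sum_congr rfl fun x _ => Finset.sum_congr rfl fun i _ => ?_
          rw [Matrix.vecMulVec_apply, Matrix.vecMulVec_apply, star_mul', hconj, hconj,
            hb2 i s (-s'), hb2 x t (-t')]
          ring
      _ = (∑ i : G, F i (s + -s')) * (∑ x : G, F x (t + -t')) := by
          rw [Finset.sum_comm]
          rw [Finset.sum_mul_sum]
      _ = _ := by rw [hsum, hsum]
  have part2 : ∀ s t s' t' : G, (s, t) ≠ (s', t') →
      sip (Matrix.vecMulVec (fun i => F i s) (fun j => F j t))
          (Matrix.vecMulVec (fun i => F i s') (fun j => F j t')) = 0 := by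
    intro s t s' t' hne
    rw [hsip]
    have hor : s ≠ s' ∨ t ≠ t' := by
      by_contra hcon
      push_neg at hcon
      exact hne (by rw [hcon.1, hcon.2])
    rcases hor with h | h
    · rw [if_neg (fun hh => h (add_neg_eq_zero.mp hh)), zero_mul]
    · rw [if_neg (fun hh => h (add_neg_eq_zero.mp hh)), mul_zero]
  -- linear independence
  have hli : LinearIndependent ℂ
      (fun st : G × G => Matrix.vecMulVec (fun i => F i st.1) (fun j => F j st.2)) := by
    rw [Fintype.linearIndependent_iff]
    intro g hg p
    have h1 : sip (∑ st : G × G,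
          g st • Matrix.vecMulVec (fun i => F i st.1) (fun j => F j st.2))
        (Matrix.vecMulVec (fun i => F i p.1) (fun j => F j p.2))
        = g p * ((Fintype.card G : ℂ) * (Fintype.card G : ℂ)) := by
      have ha : sip (∑ st : G × G,
            g st • Matrix.vecMulVec (fun i => F i st.1) (fun j => F j st.2))
          (Matrix.vecMulVec (fun i => F i p.1) (fun j => F j p.2))
          = ∑ st : G × G, g st *
              sip (Matrix.vecMulVec (fun i => F i st.1) (fun j => F j st.2))
                (Matrix.vecMulVec (fun i => F i p.1) (fun j => F j p.2)) := by
        simp [sip, Matrix.mul_sum, Matrix.trace_sum, Matrix.mul_smul, Matrix.trace_smul,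
          smul_eq_mul]
      rw [ha, Finset.sum_eq_single p]
      · rw [hsip]; simp
      · intro b _ hb
        rw [hsip]
        have hor : b.1 ≠ p.1 ∨ b.2 ≠ p.2 := by
          by_contra hcon
          push_neg at hcon
          exact hb (Prod.ext hcon.1 hcon.2)
        rcases hor with h | h
        · rw [if_neg (fun hh => h (add_neg_eq_zero.mp hh))]; ring
        · rw [if_neg (fun hh => h (add_neg_eq_zero.mp hh))]; ring
      · intro hp; exact absurd (Finset.mem_univ p) hp
    rw [hg] at h1
    have h0 : sip (0 : Matrix G G ℂ)
        (Matrix.vecMulVec (fun i => F i p.1) (fun j => F j p.2)) = 0 := by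
      simp [sip]
    rw [h0] at h1
    rcases mul_eq_zero.mp h1.symm with h | h
    · exact h
    · exact absurd h (mul_ne_zero hNne hNne)
  have hne' : Nonempty (G × G) := ⟨(0, 0)⟩
  have hspan := hli.span_eq_top_of_card_eq_finrank
    (by simp [Module.finrank_matrix, Fintype.card_prod])
  exact ⟨part1, part2, hli, hspan⟩
end
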